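/- arXiv:2307.12086 — 2 statements merged into one kernel-verified Lean document; each statement's English description precedes it below -/
import Mathlib

section
/- Let 𝕆 be the real octonion algebra, ℓ = {i, j, i*j} a line of the Fano plane, Q_ℓ = span(1, eᵢ, eⱼ, e_{i*j}) the corresponding quaternion subalgebra, and k ∉ ℓ. Then the linear maps E and F on 𝕆 = Q_ℓ ⊕ Q_ℓ·e_k defined by E(q) = 0, E(q·e_k) = (1/2)(eᵢq)e_k and F(q) = (1/2)[eᵢ, q], F(q·e_k) = −(1/2)(q·eᵢ)e_k for q ∈ Q_ℓ are both derivations of 𝕆. -/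
noncomputable section

/-- Offset function for the octonion multiplication table: for distinct indices
`i, j` (in `ZMod 7`) with `d = j - i`, `eᵢ eⱼ = ± e_{i + octOff d}`.
It encodes the rules `eᵢe_{i+1} = e_{i+3}`, `e_{i+1}e_{i+3} = eᵢ`,
`e_{i+3}eᵢ = e_{i+1}` (indices modulo 7). -/
def octOff : ZMod 7 → ZMod 7 := fun d =>
  if d = 1 then 3 else if d = 2 then 6 else if d = 3 then 1
  else if d = 4 then 5 else if d = 5 then 4 else if d = 6 then 2 else 0

/-- Sign in `eᵢ eⱼ = octSgn (j - i) • e_{i*j}` for distinct `i, j`. -/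
def octSgn : ZMod 7 → ℝ := fun d => if d = 1 ∨ d = 2 ∨ d = 4 then 1 else -1

/-- The real octonion division algebra: a scalar part and seven imaginary
coordinates (indexed by `ZMod 7`; index `i` stands for the unit `eᵢ`,
with `e₀ = e₇`). -/
def Oct : Type := ℝ × (ZMod 7 → ℝ)

instance : AddCommGroup Oct := inferInstanceAs (AddCommGroup (ℝ × (ZMod 7 → ℝ)))
instance : Module ℝ Oct := inferInstanceAs (Module ℝ (ℝ × (ZMod 7 → ℝ)))

/-- View an octonion as a pair. -/
def oc (x : Oct) : ℝ × (ZMod 7 → ℝ) := x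
/-- Build an octonion from a pair. -/
def om (p : ℝ × (ZMod 7 → ℝ)) : Oct := p

/-- The octonion multiplication: `e₀ = 1` is the unit, `eᵢ² = -1` and
`eᵢe_{i+1} = e_{i+3} = -e_{i+1}eᵢ` for the imaginary units (indices mod 7). -/
instance : Mul Oct :=
  ⟨fun x y => om
    ((oc x).1 * (oc y).1 - ∑ i : ZMod 7, (oc x).2 i * (oc y).2 i,
     fun k => (oc x).1 * (oc y).2 k + (oc y).1 * (oc x).2 k +
       ∑ i : ZMod 7, ∑ j : ZMod 7,
         (if i ≠ j ∧ k = i + octOff (j - i) then octSgn (j - i) else 0)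
           * (oc x).2 i * (oc y).2 j)⟩

instance : One Oct := ⟨om (1, 0)⟩

/-- The imaginary basis units `eᵢ`, `i ∈ ZMod 7` (`e₀ = e₇`). -/
def e (i : ZMod 7) : Oct := om (0, Pi.single i 1)

/-- For distinct `i, j`, `idx i j = i*j` is the index with `gᵢ + gⱼ = g_{i*j}`,
i.e. `eᵢeⱼ = ± e_{idx i j}`. -/
def idx (i j : ZMod 7) : ZMod 7 := i + octOff (j - i)

/-- A linear endomorphism of the octonions is a derivation. -/
def IsOctDer (d : Oct →ₗ[ℝ] Oct) : Prop := ∀ x y : Oct, d (x * y) = d x * y + x * d y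

/-- The quaternion subalgebra `Q_ℓ = ⟨1, eᵢ, eⱼ, e_{i*j}⟩` attached to the
Fano line `ℓ = {i, j, i*j}`. -/
def Qline (i j : ZMod 7) : Submodule ℝ Oct :=
  Submodule.span ℝ ({1, e i, e j, e (idx i j)} : Set Oct)

/-- `isE i k Q E` says that `E = E_i^{ℓ,k}` : `E(q) = 0` and
`E(q·e_k) = (1/2)(eᵢq)e_k` for all `q ∈ Q = Q_ℓ`. -/
def isE (i k : ZMod 7) (Q : Submodule ℝ Oct) (E : Oct →ₗ[ℝ] Oct) : Prop :=
  ∀ q ∈ Q, E q = 0 ∧ E (q * e k) = (1/2 : ℝ) • ((e i * q) * e k)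

/-- `isF i k Q F` says that `F = F_i^{ℓ,k}` : `F(q) = (1/2)[eᵢ, q]` and
`F(q·e_k) = −(1/2)(q·eᵢ)e_k` for all `q ∈ Q = Q_ℓ`. -/
def isF (i k : ZMod 7) (Q : Submodule ℝ Oct) (F : Oct →ₗ[ℝ] Oct) : Prop :=
  ∀ q ∈ Q, F q = (1/2 : ℝ) • (e i * q - q * e i) ∧
    F (q * e k) = -((1/2 : ℝ) • ((q * e i) * e k))

end

noncomputable section
open Finset

lemma oct_ext {x y : Oct} (h1 : (oc x).1 = (oc y).1) (h2 : ∀ u, (oc x).2 u = (oc y).2 u) :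
    x = y := by
  have : oc x = oc y := Prod.ext h1 (funext h2)
  exact this

/-- structure constants -/
def γO (i j u : ZMod 7) : ℝ :=
  if i ≠ j ∧ u = i + octOff (j - i) then octSgn (j - i) else 0

lemma oc_mul_fst (x y : Oct) : (oc (x*y)).1 =
    (oc x).1*(oc y).1 - ∑ i : ZMod 7, (oc x).2 i * (oc y).2 i := rfl
lemma oc_mul_snd (x y : Oct) (u : ZMod 7) : (oc (x*y)).2 u =
    (oc x).1*(oc y).2 u + (oc y).1*(oc x).2 u +
      ∑ i : ZMod 7, ∑ j : ZMod 7, γO i j u * (oc x).2 i * (oc y).2 j := rfl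
lemma oc_add_fst (x y : Oct) : (oc (x+y)).1 = (oc x).1 + (oc y).1 := rfl
lemma oc_add_snd (x y : Oct) (u : ZMod 7) : (oc (x+y)).2 u = (oc x).2 u + (oc y).2 u := rfl
lemma oc_smul_fst (c : ℝ) (x : Oct) : (oc (c • x)).1 = c * (oc x).1 := rfl
lemma oc_smul_snd (c : ℝ) (x : Oct) (u : ZMod 7) : (oc (c • x)).2 u = c * (oc x).2 u := rfl
lemma oc_one_fst : (oc 1).1 = 1 := rfl
lemma oc_one_snd (u : ZMod 7) : (oc 1).2 u = 0 := rfl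
lemma oc_zero_fst : (oc 0).1 = 0 := rfl
lemma oc_zero_snd (u : ZMod 7) : (oc 0).2 u = 0 := rfl
lemma oc_neg_fst (x : Oct) : (oc (-x)).1 = -(oc x).1 := rfl
lemma oc_neg_snd (x : Oct) (u : ZMod 7) : (oc (-x)).2 u = -(oc x).2 u := rfl
lemma oc_e_fst (t : ZMod 7) : (oc (e t)).1 = 0 := rfl
lemma oc_e_snd (t u : ZMod 7) : (oc (e t)).2 u = if u = t then 1 else 0 := by
  show Pi.single t 1 u = _
  rw [Pi.single_apply]

lemma sum1_mul (c : ℝ) (f g : ZMod 7 → ℝ) :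
    ∑ i : ZMod 7, (c * f i) * g i = c * ∑ i : ZMod 7, f i * g i := by
  rw [mul_sum]; exact sum_congr rfl fun i _ => by ring

lemma sum1_mulr (c : ℝ) (f g : ZMod 7 → ℝ) :
    ∑ i : ZMod 7, f i * (c * g i) = c * ∑ i : ZMod 7, f i * g i := by
  rw [mul_sum]; exact sum_congr rfl fun i _ => by ring

lemma sum2_mull (c : ℝ) (u : ZMod 7) (f g : ZMod 7 → ℝ) :
    ∑ i : ZMod 7, ∑ j : ZMod 7, γO i j u * (c * f i) * g j
      = c * ∑ i : ZMod 7, ∑ j : ZMod 7, γO i j u * f i * g j := by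
  rw [mul_sum]
  exact sum_congr rfl fun i _ => by rw [mul_sum]; exact sum_congr rfl fun j _ => by ring

lemma sum2_mulr (c : ℝ) (u : ZMod 7) (f g : ZMod 7 → ℝ) :
    ∑ i : ZMod 7, ∑ j : ZMod 7, γO i j u * f i * (c * g j)
      = c * ∑ i : ZMod 7, ∑ j : ZMod 7, γO i j u * f i * g j := by
  rw [mul_sum]
  exact sum_congr rfl fun i _ => by rw [mul_sum]; exact sum_congr rfl fun j _ => by ring

lemma oadd_mul (x y z : Oct) : (x + y) * z = x * z + y * z := by
  apply oct_ext
  · simp only [oc_mul_fst, oc_add_fst, oc_add_snd, add_mul, sum_add_distrib]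
    ring
  · intro u
    simp only [oc_mul_snd, oc_add_fst, oc_add_snd, add_mul, mul_add, sum_add_distrib]
    ring

lemma omul_add (x y z : Oct) : x * (y + z) = x * y + x * z := by
  apply oct_ext
  · simp only [oc_mul_fst, oc_add_fst, oc_add_snd, mul_add, sum_add_distrib]
    ring
  · intro u
    simp only [oc_mul_snd, oc_add_fst, oc_add_snd, add_mul, mul_add, sum_add_distrib]
    ring

lemma osmul_mul (c : ℝ) (x y : Oct) : (c • x) * y = c • (x * y) := by
  apply oct_ext
  · simp only [oc_mul_fst, oc_smul_fst, oc_smul_snd, sum1_mul, mul_sub]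
    ring
  · intro u
    simp only [oc_mul_snd, oc_smul_fst, oc_smul_snd, sum2_mull, mul_add]
    ring

lemma omul_smul (c : ℝ) (x y : Oct) : x * (c • y) = c • (x * y) := by
  apply oct_ext
  · simp only [oc_mul_fst, oc_smul_fst, oc_smul_snd, sum1_mulr, mul_sub]
    ring
  · intro u
    simp only [oc_mul_snd, oc_smul_fst, oc_smul_snd, sum2_mulr, mul_add]
    ring

lemma ozero_mul (x : Oct) : (0 : Oct) * x = 0 := by
  apply oct_ext
  · simp [oc_mul_fst, oc_zero_fst, oc_zero_snd]
  · intro u; simp [oc_mul_snd, oc_zero_fst, oc_zero_snd, γO]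

lemma omul_zero (x : Oct) : x * (0 : Oct) = 0 := by
  apply oct_ext
  · simp [oc_mul_fst, oc_zero_fst, oc_zero_snd]
  · intro u; simp [oc_mul_snd, oc_zero_fst, oc_zero_snd, γO]

lemma oone_mul (x : Oct) : (1 : Oct) * x = x := by
  apply oct_ext
  · simp [oc_mul_fst, oc_one_fst, oc_one_snd]
  · intro u; simp [oc_mul_snd, oc_one_fst, oc_one_snd, γO]

lemma omul_one (x : Oct) : x * (1 : Oct) = x := by
  apply oct_ext
  · simp [oc_mul_fst, oc_one_fst, oc_one_snd]
  · intro u; simp [oc_mul_snd, oc_one_fst, oc_one_snd, γO]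

lemma oneg_mul (x y : Oct) : (-x) * y = -(x * y) := by
  have h1 : ((-1 : ℝ) • x) = -x := by rw [neg_smul, one_smul]
  have h2 : ((-1 : ℝ) • (x * y)) = -(x * y) := by rw [neg_smul, one_smul]
  rw [← h1, osmul_mul, h2]

lemma e_mul_e {a b : ZMod 7} (h : a ≠ b) : e a * e b = octSgn (b - a) • e (idx a b) := by
  apply oct_ext
  · simp only [oc_mul_fst, oc_e_fst, oc_e_snd, oc_smul_fst, mul_zero, zero_sub,
      neg_eq_zero]
    refine sum_eq_zero fun i _ => ?_
    by_cases hia : i = a <;> by_cases hib : i = b <;> simp_all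
  · intro u
    simp only [oc_mul_snd, oc_e_fst, oc_e_snd, oc_smul_snd, zero_mul, mul_zero, zero_add,
      add_zero]
    rw [Finset.sum_eq_single a]
    · rw [Finset.sum_eq_single b]
      · simp only [if_pos rfl, mul_one, γO, h, idx, ne_eq, not_false_iff, true_and]
        by_cases hu : u = a + octOff (b - a) <;> simp [hu]
      · intro j _ hj; simp [hj]
      · intro hb; exact absurd (mem_univ b) hb
    · intro i _ hi
      refine Finset.sum_eq_zero fun j _ => ?_
      simp [hi]
    · intro ha; exact absurd (mem_univ a) ha

lemma e_mul_self (a : ZMod 7) : e a * e a = -1 := by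
  apply oct_ext
  · simp only [oc_mul_fst, oc_e_fst, oc_e_snd, oc_neg_fst, oc_one_fst, mul_zero, zero_sub]
    rw [Finset.sum_eq_single a]
    · simp
    · intro i _ hi; simp [hi]
    · intro ha; exact absurd (mem_univ a) ha
  · intro u
    simp only [oc_mul_snd, oc_e_fst, oc_e_snd, oc_neg_snd, oc_one_snd, zero_mul, mul_zero,
      zero_add, add_zero, neg_zero]
    refine sum_eq_zero fun i _ => sum_eq_zero fun j _ => ?_
    by_cases hij : i = j
    · simp [γO, hij]
    · by_cases hia : i = a <;> by_cases hja : j = a <;> simp_all [γO]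

end
noncomputable section
open Finset

lemma oc_sum_fst (s : Finset (ZMod 7)) (f : ZMod 7 → Oct) :
    (oc (∑ t ∈ s, f t)).1 = ∑ t ∈ s, (oc (f t)).1 := by
  induction s using Finset.cons_induction with
  | empty => rfl
  | cons a s ha ih => rw [Finset.sum_cons, Finset.sum_cons, oc_add_fst, ih]

lemma oc_sum_snd (s : Finset (ZMod 7)) (f : ZMod 7 → Oct) (u : ZMod 7) :
    (oc (∑ t ∈ s, f t)).2 u = ∑ t ∈ s, (oc (f t)).2 u := by
  induction s using Finset.cons_induction with
  | empty => rfl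
  | cons a s ha ih => rw [Finset.sum_cons, Finset.sum_cons, oc_add_snd, ih]

def octBasisSet : Set Oct := insert 1 (Set.range e)

lemma oct_decomp (x : Oct) : x = (oc x).1 • (1 : Oct) + ∑ t : ZMod 7, (oc x).2 t • e t := by
  apply oct_ext
  · rw [oc_add_fst, oc_sum_fst]
    simp [oc_smul_fst, oc_one_fst, oc_e_fst]
  · intro u
    rw [oc_add_snd, oc_sum_snd]
    simp only [oc_smul_snd, oc_one_snd, oc_e_snd, mul_zero]
    rw [Finset.sum_eq_single u]
    · simp
    · intro t _ ht; simp [Ne.symm ht]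
    · intro hu; exact absurd (mem_univ u) hu

lemma mem_span_basis (x : Oct) : x ∈ Submodule.span ℝ octBasisSet := by
  rw [oct_decomp x]
  refine add_mem (Submodule.smul_mem _ _ (Submodule.subset_span (Set.mem_insert _ _)))
    (sum_mem fun t _ => Submodule.smul_mem _ _
      (Submodule.subset_span (Set.mem_insert_of_mem _ ⟨t, rfl⟩)))

lemma der_of_basis (D : Oct →ₗ[ℝ] Oct) (h1 : D 1 = 0)
    (hb : ∀ a b : ZMod 7, D (e a * e b) = D (e a) * e b + e a * D (e b)) : IsOctDer D := by
  have hSS : ∀ x ∈ octBasisSet, ∀ y ∈ octBasisSet,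
      D (x * y) = D x * y + x * D y := by
    rintro x (rfl | ⟨a, rfl⟩) y (rfl | ⟨b, rfl⟩)
    · rw [oone_mul, h1, ozero_mul, oone_mul, zero_add]
    · rw [oone_mul, h1, ozero_mul, oone_mul, zero_add]
    · rw [omul_one, h1, omul_zero, omul_one, add_zero]
    · exact hb a b
  have key : ∀ y ∈ octBasisSet, ∀ x : Oct, D (x * y) = D x * y + x * D y := by
    intro y hy x
    refine Submodule.span_induction (p := fun x _ => D (x * y) = D x * y + x * D y)
      ?_ ?_ ?_ ?_ (mem_span_basis x)
    · intro z hz; exact hSS z hz y hy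
    · show D ((0 : Oct) * y) = D (0 : Oct) * y + (0 : Oct) * D y
      simp only [ozero_mul, map_zero, zero_add]
    · intro u v _ _ hu hv
      show D ((u + v) * y) = D (u + v) * y + (u + v) * D y
      rw [oadd_mul, map_add, hu, hv, map_add, oadd_mul, oadd_mul]
      abel
    · intro c u _ hu
      show D ((c • u) * y) = D (c • u) * y + (c • u) * D y
      rw [osmul_mul, map_smul, hu, map_smul, smul_add, osmul_mul, osmul_mul]
  intro x y
  refine Submodule.span_induction (p := fun y _ => D (x * y) = D x * y + x * D y)
    ?_ ?_ ?_ ?_ (mem_span_basis y)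
  · intro z hz; exact key z hz x
  · show D (x * (0 : Oct)) = D x * (0 : Oct) + x * D (0 : Oct)
    simp only [omul_zero, map_zero, add_zero]
  · intro u v _ _ hu hv
    show D (x * (u + v)) = D x * (u + v) + x * D (u + v)
    rw [omul_add, map_add, hu, hv, map_add, omul_add, omul_add]
    abel
  · intro c u _ hu
    show D (x * (c • u)) = D x * (c • u) + x * D (c • u)
    rw [omul_smul, map_smul, hu, map_smul, smul_add, omul_smul, omul_smul]

end
noncomputable section
open Finset

def octSgnZ : ZMod 7 → ℤ := fun d => if d = 1 ∨ d = 2 ∨ d = 4 then 1 else -1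

lemma octSgn_cast (d : ZMod 7) : octSgn d = ((octSgnZ d : ℤ) : ℝ) := by
  by_cases h : d = 1 ∨ d = 2 ∨ d = 4 <;> simp [octSgn, octSgnZ, h]

lemma octSgn_mul_self (d : ZMod 7) : octSgn d * octSgn d = 1 := by
  by_cases h : d = 1 ∨ d = 2 ∨ d = 4 <;> simp [octSgn, h]

/-- single basis vector with ℤ coefficient, in the ℤ-model -/
def sing (z : ℤ) (s : ZMod 7) : ℤ × (ZMod 7 → ℤ) := (0, Pi.single s z)
/-- model for `z • (e s * e t)` -/
def bmul (z : ℤ) (s t : ZMod 7) : ℤ × (ZMod 7 → ℤ) :=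
  if s = t then (-z, 0) else (0, Pi.single (idx s t) (z * octSgnZ (t - s)))
def addZ (v w : ℤ × (ZMod 7 → ℤ)) : ℤ × (ZMod 7 → ℤ) := (v.1 + w.1, fun u => v.2 u + w.2 u)
def smulZ (z : ℤ) (v : ℤ × (ZMod 7 → ℤ)) : ℤ × (ZMod 7 → ℤ) := (z * v.1, fun u => z * v.2 u)

/-- interpretation of the ℤ-model in the octonions -/
def Ψ (v : ℤ × (ZMod 7 → ℤ)) : Oct := om ((v.1 : ℝ), fun u => (v.2 u : ℝ))

lemma oc_Ψ_fst (v : ℤ × (ZMod 7 → ℤ)) : (oc (Ψ v)).1 = (v.1 : ℝ) := rfl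
lemma oc_Ψ_snd (v : ℤ × (ZMod 7 → ℤ)) (u : ZMod 7) : (oc (Ψ v)).2 u = (v.2 u : ℝ) := rfl

lemma Ψ_add (v w : ℤ × (ZMod 7 → ℤ)) : Ψ (addZ v w) = Ψ v + Ψ w := by
  apply oct_ext
  · simp [oc_Ψ_fst, oc_add_fst, addZ]
  · intro u; simp [oc_Ψ_snd, oc_add_snd, addZ]

lemma Ψ_smul (z : ℤ) (v : ℤ × (ZMod 7 → ℤ)) : Ψ (smulZ z v) = ((z : ℤ) : ℝ) • Ψ v := by
  apply oct_ext
  · simp [oc_Ψ_fst, oc_smul_fst, smulZ]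
  · intro u; simp [oc_Ψ_snd, oc_smul_snd, smulZ]

lemma Ψ_zero : Ψ (0, 0) = 0 := by
  apply oct_ext
  · simp [oc_Ψ_fst, oc_zero_fst]
  · intro u
    show ((0:ℤ):ℝ) = (oc (0:Oct)).2 u
    simp [oc_zero_snd]

lemma Ψ_sing (z : ℤ) (s : ZMod 7) : Ψ (sing z s) = ((z : ℤ) : ℝ) • e s := by
  apply oct_ext
  · simp [oc_Ψ_fst, oc_smul_fst, oc_e_fst, sing]
  · intro u
    simp only [oc_Ψ_snd, oc_smul_snd, oc_e_snd, sing, Pi.single_apply]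
    by_cases hu : u = s <;> simp [hu, eq_comm]

lemma Ψ_bmul (z : ℤ) (s t : ZMod 7) : Ψ (bmul z s t) = ((z : ℤ) : ℝ) • (e s * e t) := by
  unfold bmul
  by_cases h : s = t
  · subst h
    rw [if_pos rfl, e_mul_self]
    apply oct_ext
    · show ((-z : ℤ) : ℝ) = _
      simp [oc_smul_fst, oc_neg_fst, oc_one_fst]
    · intro u
      show ((0:ℤ):ℝ) = _
      simp [oc_smul_snd, oc_neg_snd, oc_one_snd]
  · rw [if_neg h, e_mul_e h, show (Ψ (0, Pi.single (idx s t) (z * octSgnZ (t - s))) : Oct)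
      = Ψ (sing (z * octSgnZ (t - s)) (idx s t)) from rfl, Ψ_sing, smul_smul, octSgn_cast]
    push_cast
    ring_nf

/-- coefficients of E on the imaginary units: `E (e t) = (cE t / 2) • e (idx i t)` -/
def cE (i j k : ZMod 7) : ZMod 7 → ℤ := fun t =>
  if t = i ∨ t = j ∨ t = idx i j then 0
  else if t = k ∨ t = idx i k then octSgnZ (t - i)
  else -octSgnZ (t - i)

/-- coefficients of F on the imaginary units -/
def cF (i j k : ZMod 7) : ZMod 7 → ℤ := fun t =>
  if t = i then 0
  else if t = j ∨ t = idx i j then 2 * octSgnZ (t - i)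
  else -octSgnZ (t - i)

set_option maxHeartbeats 1000000 in
/-- every index is one of the seven named points -/
lemma cover : ∀ i j k t : ZMod 7, i ≠ j → ¬(k = i ∨ k = j ∨ k = idx i j) →
    (t = i ∨ t = j ∨ t = idx i j ∨ t = k ∨ t = idx i k ∨ t = idx j k ∨
      t = idx (idx i j) k) := by decide

set_option maxHeartbeats 4000000 in
/-- ℤ-model derivation identity for `E` -/
lemma modelE : ∀ i j k a b : ZMod 7, i ≠ j → ¬(k = i ∨ k = j ∨ k = idx i j) →
    (if a = b
     then addZ (bmul (cE i j k a) (idx i a) a) (bmul (cE i j k a) a (idx i a)) = (0, 0)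
     else smulZ (octSgnZ (b - a)) (sing (cE i j k (idx a b)) (idx i (idx a b)))
        = addZ (bmul (cE i j k a) (idx i a) b) (bmul (cE i j k b) a (idx i b))) := by decide

set_option maxHeartbeats 4000000 in
/-- ℤ-model derivation identity for `F` -/
lemma modelF : ∀ i j k a b : ZMod 7, i ≠ j → ¬(k = i ∨ k = j ∨ k = idx i j) →
    (if a = b
     then addZ (bmul (cF i j k a) (idx i a) a) (bmul (cF i j k a) a (idx i a)) = (0, 0)
     else smulZ (octSgnZ (b - a)) (sing (cF i j k (idx a b)) (idx i (idx a b)))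
        = addZ (bmul (cF i j k a) (idx i a) b) (bmul (cF i j k b) a (idx i b))) := by decide

end
noncomputable section

lemma octSgnZ_antisymm : ∀ a b : ZMod 7, a ≠ b → octSgnZ (a - b) = -octSgnZ (b - a) := by
  decide

lemma factsIdx : ∀ i j k : ZMod 7, i ≠ j → ¬(k = i ∨ k = j ∨ k = idx i j) →
    i ≠ k ∧ j ≠ k ∧ idx i j ≠ k ∧ i ≠ idx i j ∧
    idx i (idx i k) = k ∧ idx i (idx j k) = idx (idx i j) k ∧
    idx i (idx (idx i j) k) = idx j k ∧ idx i (idx i j) = j ∧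
    idx j i = idx i j ∧ idx (idx i j) i = j := by decide

lemma factsE : ∀ i j k : ZMod 7, i ≠ j → ¬(k = i ∨ k = j ∨ k = idx i j) →
    cE i j k i = 0 ∧ cE i j k j = 0 ∧ cE i j k (idx i j) = 0 ∧
    cE i j k k = octSgnZ (k - i) ∧
    cE i j k (idx i k) = -octSgnZ (k - i) ∧
    cE i j k (idx j k) = octSgnZ (k - j) * (octSgnZ (j - i) * octSgnZ (k - idx i j)) ∧
    cE i j k (idx (idx i j) k)
      = octSgnZ (k - idx i j) * (octSgnZ (idx i j - i) * octSgnZ (k - j)) := by decide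

lemma factsF : ∀ i j k : ZMod 7, i ≠ j → ¬(k = i ∨ k = j ∨ k = idx i j) →
    cF i j k i = 0 ∧ cF i j k j = 2 * octSgnZ (j - i) ∧
    cF i j k (idx i j) = 2 * octSgnZ (idx i j - i) ∧
    cF i j k k = -octSgnZ (k - i) ∧
    cF i j k (idx i k) = octSgnZ (k - i) ∧
    cF i j k (idx j k) = octSgnZ (k - j) * (octSgnZ (j - i) * octSgnZ (k - idx i j)) ∧
    cF i j k (idx (idx i j) k)
      = octSgnZ (k - idx i j) * (octSgnZ (idx i j - i) * octSgnZ (k - j)) := by decide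

lemma smul_cancel {d : ZMod 7} {x y : Oct} (h : octSgn d • x = y) : x = octSgn d • y := by
  rw [← h, smul_smul, octSgn_mul_self, one_smul]

/-- generic claim B: basis-pair derivation identity from the ℤ-model identity -/
lemma claimB (i : ZMod 7) (D : Oct →ₗ[ℝ] Oct) (c : ZMod 7 → ℤ)
    (h1 : D 1 = 0)
    (hD : ∀ t, D (e t) = (1/2 : ℝ) • Ψ (sing (c t) (idx i t)))
    (hmodel : ∀ a b : ZMod 7,
      (if a = b
       then addZ (bmul (c a) (idx i a) a) (bmul (c a) a (idx i a)) = (0, 0)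
       else smulZ (octSgnZ (b - a)) (sing (c (idx a b)) (idx i (idx a b)))
          = addZ (bmul (c a) (idx i a) b) (bmul (c b) a (idx i b)))) :
    ∀ a b : ZMod 7, D (e a * e b) = D (e a) * e b + e a * D (e b) := by
  intro a b
  have t1 : Ψ (sing (c a) (idx i a)) * e b = Ψ (bmul (c a) (idx i a) b) := by
    rw [Ψ_sing, Ψ_bmul, osmul_mul]
  have t2 : e a * Ψ (sing (c b) (idx i b)) = Ψ (bmul (c b) a (idx i b)) := by
    rw [Ψ_sing, Ψ_bmul, omul_smul]
  have hRHS : D (e a) * e b + e a * D (e b)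
      = (1/2 : ℝ) • Ψ (addZ (bmul (c a) (idx i a) b) (bmul (c b) a (idx i b))) := by
    rw [hD a, hD b, osmul_mul, omul_smul, t1, t2, Ψ_add, smul_add]
  rw [hRHS]
  by_cases hab : a = b
  · subst hab
    have hm := hmodel a a
    rw [if_pos rfl] at hm
    rw [e_mul_self, show ((-1 : Oct)) = -(1 : Oct) from rfl, map_neg, h1, neg_zero,
      hm, Ψ_zero, smul_zero]
  · have hm := hmodel a b
    rw [if_neg hab] at hm
    rw [e_mul_e hab, map_smul, hD (idx a b), octSgn_cast, smul_smul, mul_comm,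
      ← smul_smul, ← Ψ_smul, hm]

end

theorem stmt6 : ∀ i j k : ZMod 7, i ≠ j → k ∉ ({i, j, idx i j} : Set (ZMod 7)) →
    ∀ E F : Oct →ₗ[ℝ] Oct, isE i k (Qline i j) E → isF i k (Qline i j) F →
      IsOctDer E ∧ IsOctDer F := by
  intro i j k hij hkS E F hE hF
  have hk' : ¬(k = i ∨ k = j ∨ k = idx i j) := fun h => hkS (by rcases h with h|h|h <;> simp [h])
  obtain ⟨hik, hjk, hmk, him, hp4, hq5, hr6, him7, hji8, hmi9⟩ := factsIdx i j k hij hk'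
  obtain ⟨fEi, fEj, fEm, fEk, fEp, fEq, fEr⟩ := factsE i j k hij hk'
  obtain ⟨fFi, fFj, fFm, fFk, fFp, fFq, fFr⟩ := factsF i j k hij hk'
  have h1Q : (1 : Oct) ∈ Qline i j := Submodule.subset_span (by simp)
  have hiQ : e i ∈ Qline i j := Submodule.subset_span (by simp)
  have hjQ : e j ∈ Qline i j := Submodule.subset_span (by simp)
  have hmQ : e (idx i j) ∈ Qline i j := Submodule.subset_span (by simp)
  obtain ⟨hE1, hEk0⟩ := hE 1 h1Q
  obtain ⟨hEi0, hEp0⟩ := hE (e i) hiQ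
  obtain ⟨hEj0, hEq0⟩ := hE (e j) hjQ
  obtain ⟨hEm0, hEr0⟩ := hE (e (idx i j)) hmQ
  rw [oone_mul] at hEk0
  rw [omul_one] at hEk0
  have hEA : ∀ t : ZMod 7, E (e t) = (1/2 : ℝ) • Ψ (sing (cE i j k t) (idx i t)) := by
    intro t
    rcases cover i j k t hij hk' with h | h | h | h | h | h | h <;> rw [h]
    · rw [hEi0, fEi]; simp [Ψ_sing]
    · rw [hEj0, fEj]; simp [Ψ_sing]
    · rw [hEm0, fEm]; simp [Ψ_sing]
    · rw [hEk0, e_mul_e hik, fEk, Ψ_sing]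
      simp only [octSgn_cast]
    · rw [e_mul_self, oneg_mul, oone_mul, e_mul_e hik] at hEp0
      simp only [map_smul] at hEp0
      have h2 := smul_cancel hEp0
      rw [h2, hp4, fEp, Ψ_sing]
      simp only [octSgn_cast]
      push_cast
      module
    · rw [e_mul_e hjk, e_mul_e hij, osmul_mul, e_mul_e hmk] at hEq0
      simp only [map_smul] at hEq0
      have h2 := smul_cancel hEq0
      rw [h2, hq5, fEq, Ψ_sing]
      simp only [octSgn_cast]
      push_cast
      module
    · rw [e_mul_e hmk, e_mul_e him, him7, osmul_mul, e_mul_e hjk] at hEr0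
      simp only [map_smul] at hEr0
      have h2 := smul_cancel hEr0
      rw [h2, hr6, fEr, Ψ_sing]
      simp only [octSgn_cast]
      push_cast
      module
  obtain ⟨hF1c, hFk0⟩ := hF 1 h1Q
  have hF1 : F 1 = 0 := by rw [hF1c, oone_mul, omul_one, sub_self, smul_zero]
  rw [oone_mul, oone_mul] at hFk0
  obtain ⟨hFi0', hFp0⟩ := hF (e i) hiQ
  have hFi0 : F (e i) = 0 := by rw [hFi0', sub_self, smul_zero]
  obtain ⟨hFj0, hFq0⟩ := hF (e j) hjQ
  obtain ⟨hFm0, hFr0⟩ := hF (e (idx i j)) hmQ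
  have hFA : ∀ t : ZMod 7, F (e t) = (1/2 : ℝ) • Ψ (sing (cF i j k t) (idx i t)) := by
    intro t
    rcases cover i j k t hij hk' with h | h | h | h | h | h | h <;> rw [h]
    · rw [hFi0, fFi]; simp [Ψ_sing]
    · rw [hFj0, e_mul_e hij, e_mul_e (Ne.symm hij), hji8, fFj, Ψ_sing]
      simp only [octSgn_cast]
      rw [octSgnZ_antisymm i j hij]
      push_cast
      module
    · rw [hFm0, e_mul_e him, him7, e_mul_e (Ne.symm him), hmi9, fFm, Ψ_sing]
      simp only [octSgn_cast]
      rw [octSgnZ_antisymm i (idx i j) him]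
      push_cast
      module
    · rw [hFk0, e_mul_e hik, fFk, Ψ_sing]
      simp only [octSgn_cast]
      push_cast
      module
    · rw [e_mul_self, oneg_mul, oone_mul, e_mul_e hik] at hFp0
      simp only [map_smul] at hFp0
      have h2 := smul_cancel hFp0
      rw [h2, hp4, fFp, Ψ_sing]
      simp only [octSgn_cast]
      push_cast
      module
    · rw [e_mul_e hjk, e_mul_e (Ne.symm hij), hji8, osmul_mul, e_mul_e hmk] at hFq0
      simp only [map_smul] at hFq0
      have h2 := smul_cancel hFq0
      rw [h2, hq5, fFq, Ψ_sing]
      simp only [octSgn_cast]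
      rw [octSgnZ_antisymm i j hij]
      push_cast
      module
    · rw [e_mul_e hmk, e_mul_e (Ne.symm him), hmi9, osmul_mul, e_mul_e hjk] at hFr0
      simp only [map_smul] at hFr0
      have h2 := smul_cancel hFr0
      rw [h2, hr6, fFr, Ψ_sing]
      simp only [octSgn_cast]
      rw [octSgnZ_antisymm i (idx i j) him]
      push_cast
      module
  exact ⟨der_of_basis E hE1 (claimB i E (cE i j k) hE1 hEA fun a b => modelE i j k a b hij hk'),
    der_of_basis F hF1 (claimB i F (cF i j k) hF1 hFA fun a b => modelF i j k a b hij hk')⟩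
end

section
/- With notation as in the twisted model: E_i^{ℓ,k} = E_i^{ℓ,i*k} = −E_i^{ℓ,j*k} = −E_i^{ℓ,i*j*k}, and F_i^{ℓ,k} does not depend on the choice of k ∉ ℓ (i.e. F_i^{ℓ,k} = F_i^{ℓ,k'} for all k, k' ∉ ℓ). -/
/-!
For `m ∉ ℓ` the product `q = -(e_m e_k)` lies in `Q_ℓ` and `q e_k = e_m`, so the defining
conditions pin a candidate `E_i^{ℓ,k}` or `F_i^{ℓ,k}` down on every basis unit: on `Q_ℓ` they are
given outright, and `E(e_m) = ½ (e_i q) e_k`, `F(e_m) = -½ (q e_i) e_k`. These values are signed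
basis units, so comparing them for different `k` is a finite computation with the products of
`±1, ±e_a`. It shows that `F(e_m) = ½ e_m e_i` whatever `k ∉ ℓ` is, and that the values of `E`
change by the stated signs when `k` is replaced by `i*k`, `j*k` or `(i*j)*k`.
-/

namespace Oct

theorem ext {x y : Oct} (h₁ : (oc x).1 = (oc y).1) (h₂ : ∀ k, (oc x).2 k = (oc y).2 k) :
    x = y :=
  Prod.ext h₁ (funext h₂)

theorem oc_mul_fst (x y : Oct) :
    (oc (x * y)).1 = (oc x).1 * (oc y).1 - ∑ i : ZMod 7, (oc x).2 i * (oc y).2 i := rfl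

theorem oc_mul_snd (x y : Oct) (k : ZMod 7) : (oc (x * y)).2 k =
    (oc x).1 * (oc y).2 k + (oc y).1 * (oc x).2 k +
      ∑ i : ZMod 7, ∑ j : ZMod 7,
        (if i ≠ j ∧ k = i + octOff (j - i) then octSgn (j - i) else 0)
          * (oc x).2 i * (oc y).2 j := rfl

theorem oc_smul (c : ℝ) (x : Oct) : oc (c • x) = c • oc x := rfl
theorem oc_add (x y : Oct) : oc (x + y) = oc x + oc y := rfl
theorem oc_neg (x : Oct) : oc (-x) = -oc x := rfl
theorem oc_sum (s : Finset (ZMod 7)) (f : ZMod 7 → Oct) :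
    oc (∑ l ∈ s, f l) = ∑ l ∈ s, oc (f l) := rfl
theorem oc_one : oc 1 = (1, 0) := rfl
theorem oc_e (a : ZMod 7) : oc (e a) = (0, Pi.single a 1) := rfl

instance : MulOneClass Oct where
  one_mul x := by apply ext <;> simp [oc_mul_fst, oc_mul_snd, oc_one]
  mul_one x := by apply ext <;> simp [oc_mul_fst, oc_mul_snd, oc_one]

instance : IsScalarTower ℝ Oct Oct where
  smul_assoc c x y := by
    apply ext
    · simp only [smul_eq_mul, oc_mul_fst, oc_smul, Prod.smul_fst, Prod.smul_snd, Pi.smul_apply,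
        Finset.mul_sum, mul_sub]
      ring_nf
    · intro k
      simp only [smul_eq_mul, oc_mul_snd, oc_smul, Prod.smul_fst, Prod.smul_snd, Pi.smul_apply,
        Finset.mul_sum, mul_add]
      ring_nf

instance : SMulCommClass ℝ Oct Oct where
  smul_comm c x y := by
    apply ext
    · simp only [smul_eq_mul, oc_mul_fst, oc_smul, Prod.smul_fst, Prod.smul_snd, Pi.smul_apply,
        Finset.mul_sum, mul_sub]
      ring_nf
    · intro k
      simp only [smul_eq_mul, oc_mul_snd, oc_smul, Prod.smul_fst, Prod.smul_snd, Pi.smul_apply,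
        Finset.mul_sum, mul_add]
      ring_nf

theorem e_mul_self (a : ZMod 7) : e a * e a = -1 := by
  apply ext
  · simp [oc_mul_fst, oc_e, oc_neg, oc_one, Pi.single_apply]
  · intro k
    simp [oc_mul_snd, oc_e, oc_neg, oc_one, Pi.single_apply]

theorem e_mul_e {a b : ZMod 7} (h : a ≠ b) : e a * e b = octSgn (b - a) • e (idx a b) := by
  apply ext
  · simp [oc_mul_fst, oc_e, oc_smul, Pi.single_apply, Ne.symm h]
  · intro k
    simp [oc_mul_snd, oc_e, oc_smul, Pi.single_apply, h, idx]

theorem eq_smul_one_add_sum (x : Oct) :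
    x = (oc x).1 • (1 : Oct) + ∑ l : ZMod 7, (oc x).2 l • e l := by
  apply ext
  · simp [oc_add, oc_smul, oc_one, oc_sum, Prod.fst_sum, oc_e]
  · intro k
    simp [oc_add, oc_smul, oc_one, oc_sum, Prod.snd_sum, oc_e, Pi.single_apply, Finset.sum_apply]

theorem linearMap_ext {A B : Oct →ₗ[ℝ] Oct} (h₁ : A 1 = B 1) (he : ∀ l, A (e l) = B (e l)) :
    A = B := by
  ext x
  rw [eq_smul_one_add_sum x]
  simp only [map_add, map_smul, map_sum, h₁, he]

end Oct

def fanoLine (i j : ZMod 7) : Set (ZMod 7) := {i, j, idx i j}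

instance (i j m : ZMod 7) : Decidable (m ∈ fanoLine i j) :=
  inferInstanceAs (Decidable (m = i ∨ m = j ∨ m = idx i j))

theorem idx_not_mem_fanoLine {i j k : ZMod 7} (hij : i ≠ j) (hk : k ∉ fanoLine i j) :
    idx i k ∉ fanoLine i j ∧ idx j k ∉ fanoLine i j ∧ idx (idx i j) k ∉ fanoLine i j := by
  decide +revert

/-- `⟨s, none⟩` stands for `s • 1` and `⟨s, some a⟩` for `s • e a`. -/
structure SignedUnit where
  sign : ℤˣ
  base : Option (ZMod 7)

namespace SignedUnit

instance : DecidableEq SignedUnit := fun u v =>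
  decidable_of_iff (u.sign = v.sign ∧ u.base = v.base) (by cases u; cases v; simp)

def unitSgn (d : ZMod 7) : ℤˣ := if d = 1 ∨ d = 2 ∨ d = 4 then 1 else -1

theorem cast_unitSgn (d : ZMod 7) : ((unitSgn d : ℤ) : ℝ) = octSgn d := by
  unfold unitSgn octSgn; split_ifs <;> norm_num

def basisMul : Option (ZMod 7) → Option (ZMod 7) → SignedUnit
  | none, b => ⟨1, b⟩
  | some a, none => ⟨1, some a⟩
  | some a, some b => if a = b then ⟨-1, none⟩ else ⟨unitSgn (b - a), some (idx a b)⟩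

instance : Mul SignedUnit :=
  ⟨fun u v => ⟨u.sign * v.sign * (basisMul u.base v.base).sign, (basisMul u.base v.base).base⟩⟩

instance : InvolutiveNeg SignedUnit where
  neg u := ⟨-u.sign, u.base⟩
  neg_neg u := congrArg (SignedUnit.mk · u.base) (neg_neg u.sign)

def ofIdx (a : ZMod 7) : SignedUnit := ⟨1, some a⟩

def basis : Option (ZMod 7) → Oct
  | none => 1
  | some a => e a

def val (u : SignedUnit) : Oct := ((u.sign : ℤ) : ℝ) • basis u.base

theorem val_ofIdx (a : ZMod 7) : val (ofIdx a) = e a := by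
  simp [val, ofIdx, basis]

theorem val_neg (u : SignedUnit) : val (-u) = -val u := by
  show (((-u.sign : ℤˣ) : ℤ) : ℝ) • basis u.base = -(((u.sign : ℤ) : ℝ) • basis u.base)
  rw [Units.val_neg, Int.cast_neg, neg_smul]

theorem basis_mul (a b : Option (ZMod 7)) : basis a * basis b = val (basisMul a b) := by
  rcases a with _ | a <;> rcases b with _ | b
  · simp only [basis, basisMul, val, Units.val_one, Int.cast_one, one_smul, one_mul]
  · simp only [basis, basisMul, val, Units.val_one, Int.cast_one, one_smul, one_mul]
  · simp only [basis, basisMul, val, Units.val_one, Int.cast_one, one_smul, mul_one]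
  · by_cases hab : a = b
    · subst hab
      simp only [basis, basisMul, if_pos, val, Oct.e_mul_self, Units.val_neg, Units.val_one,
        Int.cast_neg, Int.cast_one, neg_one_smul]
    · simp only [basis, basisMul, if_neg hab, val, Oct.e_mul_e hab, cast_unitSgn]

theorem val_mul (u v : SignedUnit) : val (u * v) = val u * val v := by
  show (((u.sign * v.sign * (basisMul u.base v.base).sign : ℤˣ) : ℤ) : ℝ) •
      basis (basisMul u.base v.base).base = val u * val v
  rw [val, val, smul_mul_assoc, mul_smul_comm, basis_mul, val, smul_smul, smul_smul]
  push_cast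
  ring_nf

/-- `2 E_i^{ℓ,k}(e_m)` for `m ∉ ℓ`. -/
def eImage (i k m : ZMod 7) : SignedUnit := ofIdx i * -(ofIdx m * ofIdx k) * ofIdx k

/-- `2 F_i^{ℓ,k}(e_m)` for `m ∉ ℓ`. -/
def fImage (i k m : ZMod 7) : SignedUnit := -(-(ofIdx m * ofIdx k) * ofIdx i * ofIdx k)

theorem neg_mul_ofIdx_mul_ofIdx (a b : ZMod 7) : -(ofIdx a * ofIdx b) * ofIdx b = ofIdx a := by
  decide +revert

theorem base_ofIdx_mul_ofIdx_mem_fanoLine {i j k m : ZMod 7} (hij : i ≠ j)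
    (hk : k ∉ fanoLine i j) (hm : m ∉ fanoLine i j) :
    ∀ l, (ofIdx m * ofIdx k).base = some l → l ∈ fanoLine i j := by
  decide +revert

theorem eImage_idx_left {i j k m : ZMod 7} (hij : i ≠ j) (hk : k ∉ fanoLine i j)
    (hm : m ∉ fanoLine i j) : eImage i (idx i k) m = eImage i k m := by
  decide +revert

theorem eImage_idx_right {i j k m : ZMod 7} (hij : i ≠ j) (hk : k ∉ fanoLine i j)
    (hm : m ∉ fanoLine i j) : eImage i (idx j k) m = -eImage i k m := by
  decide +revert

theorem eImage_idx_idx {i j k m : ZMod 7} (hij : i ≠ j) (hk : k ∉ fanoLine i j)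
    (hm : m ∉ fanoLine i j) : eImage i (idx (idx i j) k) m = -eImage i k m := by
  decide +revert

theorem fImage_eq_mul {i j k m : ZMod 7} (hij : i ≠ j) (hk : k ∉ fanoLine i j)
    (hm : m ∉ fanoLine i j) : fImage i k m = ofIdx m * ofIdx i := by
  decide +revert

end SignedUnit

open SignedUnit

theorem one_mem_Qline (i j : ZMod 7) : (1 : Oct) ∈ Qline i j :=
  Submodule.subset_span (by simp)

theorem e_mem_Qline {i j l : ZMod 7} (hl : l ∈ fanoLine i j) : e l ∈ Qline i j := by
  apply Submodule.subset_span
  rcases hl with rfl | rfl | rfl <;> simp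

theorem val_mem_Qline {i j : ZMod 7} {u : SignedUnit}
    (hu : ∀ l, u.base = some l → l ∈ fanoLine i j) : val u ∈ Qline i j := by
  apply Submodule.smul_mem
  rcases hbase : u.base with _ | l
  · exact one_mem_Qline i j
  · exact e_mem_Qline (hu l hbase)

theorem linearMap_ext_of_Qline (i j : ZMod 7) {A B : Oct →ₗ[ℝ] Oct}
    (hQ : ∀ q ∈ Qline i j, A q = B q) (hoff : ∀ m ∉ fanoLine i j, A (e m) = B (e m)) : A = B := by
  refine Oct.linearMap_ext (hQ 1 (one_mem_Qline i j)) fun l => ?_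
  by_cases hl : l ∈ fanoLine i j
  · exact hQ _ (e_mem_Qline hl)
  · exact hoff l hl

theorem val_neg_mul_mem_Qline {i j k m : ZMod 7} (hij : i ≠ j) (hk : k ∉ fanoLine i j)
    (hm : m ∉ fanoLine i j) : val (-(ofIdx m * ofIdx k)) ∈ Qline i j :=
  val_mem_Qline (base_ofIdx_mul_ofIdx_mem_fanoLine hij hk hm)

theorem val_neg_mul_mul_e (m k : ZMod 7) : val (-(ofIdx m * ofIdx k)) * e k = e m := by
  rw [← val_ofIdx k, ← val_mul, neg_mul_ofIdx_mul_ofIdx, val_ofIdx]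

theorem isE.apply_e {i j k m : ZMod 7} {E : Oct →ₗ[ℝ] Oct} (hE : isE i k (Qline i j) E)
    (hij : i ≠ j) (hk : k ∉ fanoLine i j) (hm : m ∉ fanoLine i j) :
    E (e m) = (1 / 2 : ℝ) • val (eImage i k m) := by
  rw [← val_neg_mul_mul_e m k, (hE _ (val_neg_mul_mem_Qline hij hk hm)).2, ← val_ofIdx i,
    ← val_ofIdx k, ← val_mul, ← val_mul, eImage]

theorem isF.apply_e {i j k m : ZMod 7} {F : Oct →ₗ[ℝ] Oct} (hF : isF i k (Qline i j) F)
    (hij : i ≠ j) (hk : k ∉ fanoLine i j) (hm : m ∉ fanoLine i j) :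
    F (e m) = (1 / 2 : ℝ) • (e m * e i) := calc
  F (e m) = F (val (-(ofIdx m * ofIdx k)) * e k) := by rw [val_neg_mul_mul_e]
  _ = -((1 / 2 : ℝ) • (val (-(ofIdx m * ofIdx k)) * e i * e k)) :=
    (hF _ (val_neg_mul_mem_Qline hij hk hm)).2
  _ = (1 / 2 : ℝ) • (e m * e i) := by
    rw [← smul_neg, ← val_ofIdx i, ← val_ofIdx k, ← val_mul, ← val_mul, ← val_neg,
      ← fImage, fImage_eq_mul hij hk hm, val_mul, val_ofIdx, val_ofIdx]

section
variable {i j k k' : ZMod 7}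

theorem isE_eq {E E' : Oct →ₗ[ℝ] Oct} (hE : isE i k (Qline i j) E)
    (hE' : isE i k' (Qline i j) E') (hij : i ≠ j) (hk : k ∉ fanoLine i j)
    (hk' : k' ∉ fanoLine i j) (h : ∀ m ∉ fanoLine i j, eImage i k m = eImage i k' m) : E = E' := by
  refine linearMap_ext_of_Qline i j (fun q hq => ?_) fun m hm => ?_
  · rw [(hE q hq).1, (hE' q hq).1]
  · rw [hE.apply_e hij hk hm, hE'.apply_e hij hk' hm, h m hm]

theorem isE_eq_neg {E E' : Oct →ₗ[ℝ] Oct} (hE : isE i k (Qline i j) E)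
    (hE' : isE i k' (Qline i j) E') (hij : i ≠ j) (hk : k ∉ fanoLine i j)
    (hk' : k' ∉ fanoLine i j) (h : ∀ m ∉ fanoLine i j, eImage i k m = -eImage i k' m) :
    E = -E' := by
  refine linearMap_ext_of_Qline i j (fun q hq => ?_) fun m hm => ?_
  · rw [LinearMap.neg_apply, (hE q hq).1, (hE' q hq).1, neg_zero]
  · rw [LinearMap.neg_apply, hE.apply_e hij hk hm, hE'.apply_e hij hk' hm, h m hm, val_neg,
      smul_neg]

theorem isF_eq {F F' : Oct →ₗ[ℝ] Oct} (hF : isF i k (Qline i j) F)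
    (hF' : isF i k' (Qline i j) F') (hij : i ≠ j) (hk : k ∉ fanoLine i j)
    (hk' : k' ∉ fanoLine i j) : F = F' := by
  refine linearMap_ext_of_Qline i j (fun q hq => ?_) fun m hm => ?_
  · rw [(hF q hq).1, (hF' q hq).1]
  · rw [hF.apply_e hij hk hm, hF'.apply_e hij hk' hm]

end

/-- with `ℓ = {i, j, i*j}` a Fano line and `k, k' ∉ ℓ`:
`E_i^{ℓ,k} = E_i^{ℓ,i*k} = −E_i^{ℓ,j*k} = −E_i^{ℓ,i*j*k}`, while `F_i^{ℓ,k}`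
does not depend on the choice of `k ∉ ℓ`. -/
theorem stmt8 : ∀ i j k k' : ZMod 7, i ≠ j →
    k ∉ ({i, j, idx i j} : Set (ZMod 7)) → k' ∉ ({i, j, idx i j} : Set (ZMod 7)) →
    ∀ E E₂ E₃ E₄ F F' : Oct →ₗ[ℝ] Oct,
      isE i k (Qline i j) E →
      isE i (idx i k) (Qline i j) E₂ →
      isE i (idx j k) (Qline i j) E₃ →
      isE i (idx (idx i j) k) (Qline i j) E₄ →
      isF i k (Qline i j) F →
      isF i k' (Qline i j) F' →
      E = E₂ ∧ E = -E₃ ∧ E = -E₄ ∧ F = F' := by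
  intro i j k k' hij hk hk' E E₂ E₃ E₄ F F' hE hE₂ hE₃ hE₄ hF hF'
  obtain ⟨hk₂, hk₃, hk₄⟩ := idx_not_mem_fanoLine hij hk
  exact ⟨isE_eq hE hE₂ hij hk hk₂ fun m hm => (eImage_idx_left hij hk hm).symm,
    isE_eq_neg hE hE₃ hij hk hk₃ fun m hm => by rw [eImage_idx_right hij hk hm, neg_neg],
    isE_eq_neg hE hE₄ hij hk hk₄ fun m hm => by rw [eImage_idx_idx hij hk hm, neg_neg],
    isF_eq hF hF' hij hk hk'⟩
end
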